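/- arXiv:1908.08091 — 3 statements merged into one kernel-verified Lean document; each statement's English description precedes it below -/
import Mathlib

section
/- Let ζ(r) := q(r)·∫_r^{a₀} q(s)^{−1} ds for r ∈ (0,a₀] and ζ(0) := 0, where q(r) = 2^{(m₋+m₊)/2}(sin(r/2))^{m₋}(cos(r/2))^{m₊} and a₀ ∈ (0,π). Then ζ is continuous at 0, i.e. lim_{r→0⁺} ζ(r) = 0. -/
/-!
Write `ζ(r) = ∫_{(0, a₀]} 1_{s > r} q(r) / q(s) ds`. For `0 < r ≤ s ≤ a₀ < π` the sine factor of
`q` is increasing and the cosine factor lies in `[cos (a₀/2) ^ m₊, 1]`, so the integrand is bounded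
by `cos (a₀/2) ^ (-m₊)`; for fixed `s` it tends to `0` with `q(r)` since `m₋ > 0`. Dominated
convergence gives `ζ(r) → 0`.
-/

open Real Set Filter Topology MeasureTheory

lemma intervalIntegral_eq_setIntegral_Ioc_indicator_Ioi {f : ℝ → ℝ} {b r a : ℝ} (hbr : b ≤ r)
    (hra : r ≤ a) :
    ∫ s in r..a, f s = ∫ s in Ioc b a, (Ioi r).indicator f s := by
  rw [intervalIntegral.integral_of_le hra, setIntegral_indicator measurableSet_Ioi, Ioc_inter_Ioi,
    max_eq_right hbr]

lemma tendsto_mul_integral_inv_nhdsGT_zero {q : ℝ → ℝ} {a C : ℝ} (ha : 0 < a)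
    (hmeas : Measurable q) (hpos : ∀ s ∈ Ioc 0 a, 0 < q s)
    (hle : ∀ r s, 0 < r → r ≤ s → s ≤ a → q r ≤ C * q s)
    (hq : Tendsto q (𝓝[>] 0) (𝓝 0)) :
    Tendsto (fun r => q r * ∫ s in r..a, (q s)⁻¹) (𝓝[>] 0) (𝓝 0) := by
  have hC : 0 ≤ C := by
    have hqa := hpos a ⟨ha, le_rfl⟩
    nlinarith [hle a a ha le_rfl le_rfl]
  have hnear : ∀ᶠ r in 𝓝[>] (0 : ℝ), r ∈ Ioo 0 a := Ioo_mem_nhdsGT ha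
  have hrewrite : ∀ᶠ r in 𝓝[>] (0 : ℝ), ∫ s in Ioc 0 a, (Ioi r).indicator (fun s => q r * (q s)⁻¹) s
      = q r * ∫ s in r..a, (q s)⁻¹ := by
    filter_upwards [hnear] with r hr
    rw [← intervalIntegral.integral_const_mul,
      intervalIntegral_eq_setIntegral_Ioc_indicator_Ioi hr.1.le hr.2.le]
  refine Tendsto.congr' hrewrite ?_
  rw [show 𝓝 (0 : ℝ) = 𝓝 (∫ _ in Ioc 0 a, (0 : ℝ)) by simp]
  refine tendsto_integral_filter_of_dominated_convergence (fun _ => C) ?_ ?_ ?_ ?_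
  · exact Eventually.of_forall fun r =>
      ((measurable_const.mul hmeas.inv).indicator measurableSet_Ioi).aestronglyMeasurable
  · filter_upwards [hnear] with r hr
    filter_upwards [ae_restrict_mem measurableSet_Ioc] with s hs
    by_cases hrs : s ∈ Ioi r
    · rw [indicator_of_mem hrs, Real.norm_eq_abs,
        abs_of_nonneg (mul_nonneg (hpos r ⟨hr.1, hr.2.le⟩).le (inv_nonneg.2 (hpos s hs).le)),
        ← div_eq_mul_inv, div_le_iff₀ (hpos s hs)]
      exact hle r s hr.1 (le_of_lt hrs) hs.2
    · rw [indicator_of_notMem hrs, norm_zero]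
      exact hC
  · exact integrable_const C
  · filter_upwards [ae_restrict_mem measurableSet_Ioc] with s hs
    have hlt : ∀ᶠ r in 𝓝[>] (0 : ℝ), r ∈ Ioo 0 s := Ioo_mem_nhdsGT hs.1
    refine Tendsto.congr' (hlt.mono fun r hr => (indicator_of_mem hr.2 _).symm) ?_
    simpa using hq.mul_const (q s)⁻¹

noncomputable def sinCosWeight (mm mp r : ℝ) : ℝ :=
  2 ^ ((mm + mp) / 2) * sin (r / 2) ^ mm * cos (r / 2) ^ mp

namespace sinCosWeight

variable {mm mp : ℝ}

lemma measurable : Measurable (sinCosWeight mm mp) := by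
  unfold sinCosWeight; fun_prop

lemma pos {r : ℝ} (hr : r ∈ Ioo 0 π) : 0 < sinCosWeight mm mp r := by
  have hπ := pi_pos
  have hsin : 0 < sin (r / 2) := sin_pos_of_pos_of_lt_pi (by linarith [hr.1]) (by linarith [hr.2])
  have hcos : 0 < cos (r / 2) := cos_pos_of_mem_Ioo ⟨by linarith [hr.1], by linarith [hr.2]⟩
  unfold sinCosWeight
  positivity

lemma tendsto_nhdsGT_zero (hmm : 0 < mm) (hmp : 0 ≤ mp) :
    Tendsto (sinCosWeight mm mp) (𝓝[>] 0) (𝓝 0) := by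
  have hcont : Continuous (sinCosWeight mm mp) := by
    unfold sinCosWeight
    exact (continuous_const.mul ((continuous_rpow_const hmm.le).comp
      (continuous_sin.comp (continuous_id.div_const 2)))).mul
      ((continuous_rpow_const hmp).comp (continuous_cos.comp (continuous_id.div_const 2)))
  have hzero : sinCosWeight mm mp 0 = 0 := by simp [sinCosWeight, zero_rpow hmm.ne']
  simpa [hzero] using hcont.continuousWithinAt.tendsto (s := Ioi 0) (x := 0)

lemma le_mul {r s a : ℝ} (hmm : 0 ≤ mm) (hmp : 0 ≤ mp) (hr : 0 ≤ r) (hrs : r ≤ s) (hsa : s ≤ a)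
    (ha : a < π) : sinCosWeight mm mp r ≤ (cos (a / 2) ^ mp)⁻¹ * sinCosWeight mm mp s := by
  have hπ := pi_pos
  have hsin_r : 0 ≤ sin (r / 2) := sin_nonneg_of_nonneg_of_le_pi (by linarith) (by linarith)
  have hsin_s : 0 ≤ sin (s / 2) := sin_nonneg_of_nonneg_of_le_pi (by linarith) (by linarith)
  have hcos_r0 : 0 ≤ cos (r / 2) := cos_nonneg_of_mem_Icc ⟨by linarith, by linarith⟩
  have hsin : sin (r / 2) ≤ sin (s / 2) :=
    sin_le_sin_of_le_of_le_pi_div_two (by linarith) (by linarith) (by linarith)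
  have hcos_a : 0 < cos (a / 2) := cos_pos_of_mem_Ioo ⟨by linarith, by linarith⟩
  have hcos : cos (a / 2) ≤ cos (s / 2) :=
    cos_le_cos_of_nonneg_of_le_pi (by linarith) (by linarith) (by linarith)
  have hcos_r : cos (r / 2) ^ mp ≤ 1 := rpow_le_one hcos_r0 (cos_le_one _) hmp
  have hcos_pow : 0 < cos (a / 2) ^ mp := rpow_pos_of_pos hcos_a mp
  calc sinCosWeight mm mp r ≤ 2 ^ ((mm + mp) / 2) * sin (s / 2) ^ mm * 1 := by
        unfold sinCosWeight
        have := rpow_nonneg hcos_r0 mp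
        have := rpow_nonneg hsin_s mm
        gcongr
    _ ≤ 2 ^ ((mm + mp) / 2) * sin (s / 2) ^ mm * (cos (s / 2) ^ mp / cos (a / 2) ^ mp) := by
        have := rpow_nonneg hsin_s mm
        gcongr
        rw [one_le_div hcos_pow]
        gcongr
    _ = (cos (a / 2) ^ mp)⁻¹ * sinCosWeight mm mp s := by
        unfold sinCosWeight; ring

end sinCosWeight

theorem stmt9 (mm mp a₀ : ℝ) (h1 : 1 ≤ mm) (h2 : mm ≤ mp) (ha : a₀ ∈ Ioo (0:ℝ) π) :
    Tendsto
      (fun r : ℝ =>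
        (2 ^ ((mm + mp) / 2) * (Real.sin (r / 2)) ^ mm * (Real.cos (r / 2)) ^ mp) *
          ∫ s in r..a₀,
            (2 ^ ((mm + mp) / 2) * (Real.sin (s / 2)) ^ mm * (Real.cos (s / 2)) ^ mp)⁻¹)
      (nhdsWithin 0 (Ioi 0)) (nhds 0) := by
  obtain ⟨ha0, haπ⟩ := ha
  have hmm : 0 < mm := by linarith
  have hmp : 0 ≤ mp := by linarith
  exact tendsto_mul_integral_inv_nhdsGT_zero (q := sinCosWeight mm mp) ha0
    sinCosWeight.measurable (fun s hs => sinCosWeight.pos ⟨hs.1, hs.2.trans_lt haπ⟩)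
    (fun r s hr hrs hsa => sinCosWeight.le_mul hmm.le hmp hr.le hrs hsa haπ)
    (sinCosWeight.tendsto_nhdsGT_zero hmm hmp)
end

section
/- Assume m₋ > 1. With ζ(r) = q(r)∫_r^{a₀} q(s)^{−1} ds and h(r) = ((m₋+m₊)/2)cos r − (m₊−m₋)/2, one has lim_{r→0⁺} ζ(r)·(4h(r)/sin r − 2) = 4m₋/(m₋ − 1). -/
open Real Set Filter MeasureTheory intervalIntegral

noncomputable def Qf (mm mp s : ℝ) : ℝ :=
  (2:ℝ) ^ ((mm + mp) / 2) * Real.sin (s / 2) ^ mm * Real.cos (s / 2) ^ mp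

lemma Qf_pos (mm mp : ℝ) {s : ℝ} (hs : s ∈ Ioo (0:ℝ) π) : 0 < Qf mm mp s := by
  have h1 : 0 < Real.sin (s/2) :=
    Real.sin_pos_of_pos_of_lt_pi (by linarith [hs.1]) (by linarith [hs.2, Real.pi_pos])
  have h2 : 0 < Real.cos (s/2) :=
    Real.cos_pos_of_mem_Ioo ⟨by linarith [hs.1, Real.pi_pos], by linarith [hs.2]⟩
  exact mul_pos (mul_pos (Real.rpow_pos_of_pos two_pos _) (Real.rpow_pos_of_pos h1 _))
    (Real.rpow_pos_of_pos h2 _)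

lemma Qf_inv_contOn (mm mp : ℝ) : ContinuousOn (fun s => (Qf mm mp s)⁻¹) (Ioo (0:ℝ) π) := by
  apply ContinuousOn.inv₀
  · intro s hs
    have h1 : Real.sin (s/2) ≠ 0 := by
      have : 0 < Real.sin (s/2) :=
        Real.sin_pos_of_pos_of_lt_pi (by linarith [hs.1]) (by linarith [hs.2, Real.pi_pos])
      exact this.ne'
    have h2 : Real.cos (s/2) ≠ 0 := by
      have : 0 < Real.cos (s/2) :=
        Real.cos_pos_of_mem_Ioo ⟨by linarith [hs.1, Real.pi_pos], by linarith [hs.2]⟩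
      exact this.ne'
    have c0 : ContinuousAt (fun s : ℝ => Real.sin (s/2)) s :=
      (Real.continuous_sin.comp (continuous_id.div_const 2)).continuousAt
    have c0' : ContinuousAt (fun s : ℝ => Real.cos (s/2)) s :=
      (Real.continuous_cos.comp (continuous_id.div_const 2)).continuousAt
    have c1 : ContinuousAt (fun s : ℝ => Real.sin (s/2) ^ mm) s :=
      c0.rpow_const (Or.inl h1)
    have c2 : ContinuousAt (fun s : ℝ => Real.cos (s/2) ^ mp) s :=
      c0'.rpow_const (Or.inl h2)
    exact (((continuousAt_const.mul c1).mul c2)).continuousWithinAt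
  · intro s hs
    exact (Qf_pos mm mp hs).ne'

lemma sin_slope : Tendsto (fun y : ℝ => Real.sin y / y) (nhdsWithin 0 {(0:ℝ)}ᶜ) (nhds 1) := by
  have h := hasDerivAt_iff_tendsto_slope.mp (Real.hasDerivAt_sin 0)
  rw [Real.cos_zero] at h
  refine h.congr (fun y => ?_)
  simp [slope_def_field, div_eq_mul_inv]

lemma half_map : Tendsto (fun s : ℝ => s/2) (nhdsWithin 0 (Ioi (0:ℝ))) (nhdsWithin 0 {(0:ℝ)}ᶜ) := by
  have h1 : Tendsto (fun s : ℝ => s/2) (nhdsWithin 0 (Ioi (0:ℝ))) (nhds 0) := by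
    have := (tendsto_id (x := nhds (0:ℝ))).div_const (2:ℝ)
    simpa using this.mono_left (nhdsWithin_le_nhds)
  apply tendsto_nhdsWithin_of_tendsto_nhds_of_eventually_within _ h1
  filter_upwards [self_mem_nhdsWithin] with s hs
  have : (0:ℝ) < s := hs
  simp only [mem_compl_iff, mem_singleton_iff]
  positivity

lemma id_map : Tendsto (fun s : ℝ => s) (nhdsWithin 0 (Ioi (0:ℝ))) (nhdsWithin 0 {(0:ℝ)}ᶜ) := by
  apply tendsto_nhdsWithin_mono_left (fun x hx => ?_) tendsto_id
  exact ne_of_gt hx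

lemma two_lim : Tendsto (fun s : ℝ => s / Real.sin (s/2)) (nhdsWithin 0 (Ioi (0:ℝ))) (nhds 2) := by
  have h1 : Tendsto (fun s : ℝ => Real.sin (s/2) / (s/2)) (nhdsWithin 0 (Ioi (0:ℝ))) (nhds 1) :=
    sin_slope.comp half_map
  have h2 : Tendsto (fun s : ℝ => (s/2) / Real.sin (s/2)) (nhdsWithin 0 (Ioi (0:ℝ))) (nhds 1) := by
    have := h1.inv₀ one_ne_zero
    simp only [inv_div, inv_one] at this
    exact this
  have h3 := h2.const_mul (2:ℝ)
  norm_num at h3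
  refine h3.congr (fun s => ?_)
  field_simp

lemma one_lim : Tendsto (fun r : ℝ => r / Real.sin r) (nhdsWithin 0 (Ioi (0:ℝ))) (nhds 1) := by
  have h1 : Tendsto (fun r : ℝ => Real.sin r / r) (nhdsWithin 0 (Ioi (0:ℝ))) (nhds 1) :=
    sin_slope.comp id_map
  have := h1.inv₀ one_ne_zero
  simp only [inv_div, inv_one] at this
  exact this

lemma g_lim (mm mp : ℝ) :
    Tendsto (fun s => (Qf mm mp s)⁻¹ * s ^ mm) (nhdsWithin 0 (Ioi (0:ℝ)))
      (nhds ((2:ℝ) ^ mm / (2:ℝ) ^ ((mm+mp)/2))) := by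
  have hcos : Tendsto (fun s : ℝ => Real.cos (s/2)) (nhdsWithin 0 (Ioi (0:ℝ))) (nhds 1) := by
    have := ((Real.continuous_cos.comp (continuous_id.div_const 2)).tendsto 0)
    norm_num at this
    exact this.mono_left nhdsWithin_le_nhds
  have key : Tendsto
      (fun s : ℝ => ((2:ℝ) ^ ((mm+mp)/2))⁻¹ * (s / Real.sin (s/2)) ^ mm * (Real.cos (s/2)) ^ (-mp))
      (nhdsWithin 0 (Ioi (0:ℝ)))
      (nhds (((2:ℝ) ^ ((mm+mp)/2))⁻¹ * (2:ℝ) ^ mm * (1:ℝ) ^ (-mp))) := by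
    exact (tendsto_const_nhds.mul (two_lim.rpow_const (Or.inl two_ne_zero))).mul
      (hcos.rpow_const (Or.inl one_ne_zero))
  rw [Real.one_rpow, mul_one] at key
  have heq : ∀ᶠ s in nhdsWithin 0 (Ioi (0:ℝ)),
      ((2:ℝ) ^ ((mm+mp)/2))⁻¹ * (s / Real.sin (s/2)) ^ mm * (Real.cos (s/2)) ^ (-mp)
        = (Qf mm mp s)⁻¹ * s ^ mm := by
    filter_upwards [Ioo_mem_nhdsGT_of_mem (Set.mem_Ico.mpr ⟨le_refl 0, Real.pi_pos⟩)] with s hs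
    have hsin : 0 < Real.sin (s/2) :=
      Real.sin_pos_of_pos_of_lt_pi (by linarith [hs.1]) (by linarith [hs.2, Real.pi_pos])
    have hcos' : 0 < Real.cos (s/2) :=
      Real.cos_pos_of_mem_Ioo ⟨by linarith [hs.1, Real.pi_pos], by linarith [hs.2]⟩
    rw [Real.div_rpow hs.1.le hsin.le, Real.rpow_neg hcos'.le]
    unfold Qf
    have hC : ((2:ℝ) ^ ((mm+mp)/2)) ≠ 0 := (Real.rpow_pos_of_pos two_pos _).ne'
    have h1 : Real.sin (s/2) ^ mm ≠ 0 := (Real.rpow_pos_of_pos hsin _).ne'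
    have h2 : Real.cos (s/2) ^ mp ≠ 0 := (Real.rpow_pos_of_pos hcos' _).ne'
    field_simp
  rw [div_eq_inv_mul]
  exact key.congr' heq

lemma keyA (mm mp a₀ : ℝ) (h1 : 1 < mm) (ha : a₀ ∈ Ioo (0:ℝ) π) :
    Tendsto (fun r => r ^ (mm - 1) * ∫ s in r..a₀, (Qf mm mp s)⁻¹) (nhdsWithin 0 (Ioi (0:ℝ)))
      (nhds (((2:ℝ) ^ mm / (2:ℝ) ^ ((mm+mp)/2)) / (mm - 1))) := by
  set G : ℝ := (2:ℝ) ^ mm / (2:ℝ) ^ ((mm+mp)/2) with hGdef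
  have hGpos : 0 < G := div_pos (Real.rpow_pos_of_pos two_pos _) (Real.rpow_pos_of_pos two_pos _)
  have hm : 0 < mm - 1 := by linarith
  rw [Metric.tendsto_nhds]
  intro ε hε
  set ε' : ℝ := ε * (mm - 1) / 4 with hε'def
  have hε'pos : 0 < ε' := by positivity
  have hg := g_lim mm mp
  rw [Metric.tendsto_nhds] at hg
  have h3 := hg ε' hε'pos
  rw [eventually_nhdsWithin_iff, Metric.eventually_nhds_iff] at h3
  obtain ⟨δ0, hδ0pos, hδ0⟩ := h3
  set δ : ℝ := min (δ0/2) a₀ with hδdef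
  have hδpos : 0 < δ := lt_min (by linarith) ha.1
  have hδa : δ ≤ a₀ := min_le_right _ _
  have hδπ : δ < π := lt_of_le_of_lt hδa ha.2
  have hδlt : δ < δ0 := lt_of_le_of_lt (min_le_left _ _) (by linarith)
  have hgb : ∀ s : ℝ, 0 < s → s ≤ δ → |(Qf mm mp s)⁻¹ * s ^ mm - G| < ε' := by
    intro s hs hsδ
    have hd : dist s 0 < δ0 := by
      rw [Real.dist_eq, sub_zero, abs_of_pos hs]; linarith
    have h4 := hδ0 hd hs
    rwa [Real.dist_eq] at h4
  set M : ℝ := ∫ s in δ..a₀, (Qf mm mp s)⁻¹ with hMdef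
  have hsub_δa : uIcc δ a₀ ⊆ Ioo (0:ℝ) π := by
    rw [uIcc_of_le hδa]
    intro x hx
    exact ⟨lt_of_lt_of_le hδpos hx.1, lt_of_le_of_lt hx.2 ha.2⟩
  have hM0 : 0 ≤ M := by
    apply intervalIntegral.integral_nonneg hδa
    intro x hx
    have hx' : x ∈ Ioo (0:ℝ) π := hsub_δa (by rw [uIcc_of_le hδa]; exact hx)
    exact inv_nonneg.mpr (Qf_pos mm mp hx').le
  have hint_δa : IntervalIntegrable (fun s => (Qf mm mp s)⁻¹) volume δ a₀ :=
    ((Qf_inv_contOn mm mp).mono hsub_δa).intervalIntegrable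
  have main : ∀ r : ℝ, r ∈ Ioo (0:ℝ) δ →
      |r ^ (mm-1) * (∫ s in r..a₀, (Qf mm mp s)⁻¹) - G / (mm-1)|
        ≤ ε' / (mm-1) + (G/(mm-1)) * (r/δ) ^ (mm-1) + M * r ^ (mm-1) := by
    intro r hr
    obtain ⟨hr0, hrδ⟩ := hr
    have hsub_rδ : uIcc r δ ⊆ Ioo (0:ℝ) π := by
      rw [uIcc_of_le hrδ.le]
      intro x hx
      exact ⟨lt_of_lt_of_le hr0 hx.1, lt_of_le_of_lt hx.2 hδπ⟩
    have hint_rδ : IntervalIntegrable (fun s => (Qf mm mp s)⁻¹) volume r δ :=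
      ((Qf_inv_contOn mm mp).mono hsub_rδ).intervalIntegrable
    have hsplit : (∫ s in r..a₀, (Qf mm mp s)⁻¹) = (∫ s in r..δ, (Qf mm mp s)⁻¹) + M :=
      (intervalIntegral.integral_add_adjacent_intervals hint_rδ hint_δa).symm
    have hptw : ∀ x ∈ Icc r δ, (G - ε') * x ^ (-mm) ≤ (Qf mm mp x)⁻¹ ∧
        (Qf mm mp x)⁻¹ ≤ (G + ε') * x ^ (-mm) := by
      intro x hx
      have hx0 : 0 < x := lt_of_lt_of_le hr0 hx.1
      have hxb := hgb x hx0 hx.2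
      rw [abs_lt] at hxb
      have hxe : (Qf mm mp x)⁻¹ = ((Qf mm mp x)⁻¹ * x ^ mm) * x ^ (-mm) := by
        rw [mul_assoc, ← Real.rpow_add hx0]
        simp
      have hxpow : (0:ℝ) < x ^ (-mm) := Real.rpow_pos_of_pos hx0 _
      constructor
      · rw [hxe]
        exact mul_le_mul_of_nonneg_right (by linarith) hxpow.le
      · rw [hxe]
        exact mul_le_mul_of_nonneg_right (by linarith) hxpow.le
    have hint_pow : IntervalIntegrable (fun x : ℝ => x ^ (-mm)) volume r δ := by
      apply ContinuousOn.intervalIntegrable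
      intro x hx
      have hx0 : 0 < x := lt_of_lt_of_le hr0 (by rw [uIcc_of_le hrδ.le] at hx; exact hx.1)
      exact (Real.continuousAt_rpow_const x (-mm) (Or.inl hx0.ne')).continuousWithinAt
    have hJval : (∫ x in r..δ, x ^ (-mm)) = (δ ^ (-mm+1) - r ^ (-mm+1)) / (-mm+1) := by
      apply integral_rpow
      refine Or.inr ⟨by intro hc; linarith, ?_⟩
      rw [uIcc_of_le hrδ.le]
      intro hc
      exact absurd hc.1 (not_le.mpr hr0)
    have hIlow := intervalIntegral.integral_mono_on hrδ.le (hint_pow.const_mul (G - ε'))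
      hint_rδ (fun x hx => (hptw x hx).1)
    have hIup := intervalIntegral.integral_mono_on hrδ.le hint_rδ
      (hint_pow.const_mul (G + ε')) (fun x hx => (hptw x hx).2)
    rw [intervalIntegral.integral_const_mul, hJval] at hIlow hIup
    set t : ℝ := (r/δ) ^ (mm-1) with htdef
    set p : ℝ := r ^ (mm-1) with hpdef
    have ht : t = p * δ ^ (-mm+1) := by
      rw [htdef, hpdef, Real.div_rpow hr0.le hδpos.le, div_eq_mul_inv,
        ← Real.rpow_neg hδpos.le, show -(mm-1) = -mm+1 by ring]
    have hrr : p * r ^ (-mm+1) = 1 := by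
      rw [hpdef, ← Real.rpow_add hr0]
      norm_num
    have ht01 : 0 ≤ t := Real.rpow_nonneg (by positivity) _
    have ht1 : t ≤ 1 := Real.rpow_le_one (by positivity)
      (by rw [div_le_one hδpos]; exact hrδ.le) hm.le
    have hp0 : 0 ≤ p := Real.rpow_nonneg hr0.le _
    set S : ℝ := ∫ s in r..δ, (Qf mm mp s)⁻¹ with hSdef
    have hJv : p * ((δ ^ (-mm+1) - r ^ (-mm+1)) / (-mm+1)) = (1 - t)/(mm-1) := by
      have hne : -mm + 1 ≠ 0 := by intro hc; linarith
      have hne2 : mm - 1 ≠ 0 := hm.ne'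
      field_simp
      linear_combination (1 - mm) * ht + (1 - mm) * hrr
    have hpS_up : p * S ≤ (G + ε') * ((1 - t)/(mm-1)) := by
      have h5 := mul_le_mul_of_nonneg_left hIup hp0
      calc p * S ≤ p * ((G + ε') * ((δ ^ (-mm+1) - r ^ (-mm+1)) / (-mm+1))) := h5
        _ = (G + ε') * (p * ((δ ^ (-mm+1) - r ^ (-mm+1)) / (-mm+1))) := by ring
        _ = (G + ε') * ((1 - t)/(mm-1)) := by rw [hJv]
    have hpS_low : (G - ε') * ((1 - t)/(mm-1)) ≤ p * S := by
      have h5 := mul_le_mul_of_nonneg_left hIlow hp0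
      calc (G - ε') * ((1 - t)/(mm-1))
          = p * ((G - ε') * ((δ ^ (-mm+1) - r ^ (-mm+1)) / (-mm+1))) := by
            rw [show p * ((G - ε') * ((δ ^ (-mm+1) - r ^ (-mm+1)) / (-mm+1)))
              = (G - ε') * (p * ((δ ^ (-mm+1) - r ^ (-mm+1)) / (-mm+1))) by ring, hJv]
        _ ≤ p * S := h5
    rw [hsplit, abs_le]
    have e1 : (G + ε') * ((1 - t)/(mm-1))
        = G/(mm-1) + ε'/(mm-1) - (G/(mm-1))*t - (ε'/(mm-1))*t := by
      field_simp
      ring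
    have e2 : (G - ε') * ((1 - t)/(mm-1))
        = G/(mm-1) - ε'/(mm-1) - (G/(mm-1))*t + (ε'/(mm-1))*t := by
      field_simp
      ring
    rw [e1] at hpS_up
    rw [e2] at hpS_low
    have hexp : p * (S + M) = p * S + M * p := by ring
    have n1 : 0 ≤ (G/(mm-1))*t := mul_nonneg (by positivity) ht01
    have n2 : 0 ≤ (ε'/(mm-1))*t := mul_nonneg (by positivity) ht01
    have n3 : 0 ≤ M * p := mul_nonneg hM0 hp0
    constructor
    · linarith
    · linarith
  have hb0 : Tendsto (fun r : ℝ => r ^ (mm-1)) (nhds 0) (nhds 0) := by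
    have hc := (Real.continuousAt_rpow_const 0 (mm-1) (Or.inr hm.le)).tendsto
    rwa [Real.zero_rpow hm.ne'] at hc
  have hb1 : Tendsto (fun r : ℝ => r ^ (mm-1)) (nhdsWithin 0 (Ioi (0:ℝ))) (nhds 0) :=
    hb0.mono_left nhdsWithin_le_nhds
  have hb2 : Tendsto (fun r : ℝ => (r/δ) ^ (mm-1)) (nhdsWithin 0 (Ioi (0:ℝ))) (nhds 0) := by
    have hdiv : Tendsto (fun r : ℝ => r/δ) (nhds (0:ℝ)) (nhds 0) := by
      have h5 := (tendsto_id (x := nhds (0:ℝ))).div_const δ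
      simpa using h5
    exact (hb0.comp hdiv).mono_left nhdsWithin_le_nhds
  have hRHS : Tendsto (fun r : ℝ => ε'/(mm-1) + (G/(mm-1)) * (r/δ) ^ (mm-1) + M * r ^ (mm-1))
      (nhdsWithin 0 (Ioi (0:ℝ))) (nhds (ε'/(mm-1) + (G/(mm-1)) * 0 + M * 0)) :=
    (tendsto_const_nhds.add ((hb2.const_mul _))).add (hb1.const_mul _)
  have hlt : ε'/(mm-1) + (G/(mm-1)) * 0 + M * 0 < ε := by
    have he : ε' / (mm-1) = ε / 4 := by
      rw [hε'def]
      field_simp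
    rw [he]
    linarith
  have hev : ∀ᶠ r in nhdsWithin 0 (Ioi (0:ℝ)),
      ε'/(mm-1) + (G/(mm-1)) * (r/δ) ^ (mm-1) + M * r ^ (mm-1) < ε :=
    hRHS.eventually_lt_const hlt
  filter_upwards [hev, Ioo_mem_nhdsGT_of_mem (mem_Ico.mpr ⟨le_refl (0:ℝ), hδpos⟩)]
    with r hrev hrmem
  rw [Real.dist_eq]
  exact lt_of_le_of_lt (main r hrmem) hrev

theorem stmt11 (mm mp a₀ : ℝ) (h1 : 1 < mm) (h2 : mm ≤ mp) (ha : a₀ ∈ Ioo (0:ℝ) π) :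
    Tendsto
      (fun r : ℝ =>
        ((2 ^ ((mm + mp) / 2) * (Real.sin (r / 2)) ^ mm * (Real.cos (r / 2)) ^ mp) *
            ∫ s in r..a₀,
              (2 ^ ((mm + mp) / 2) * (Real.sin (s / 2)) ^ mm * (Real.cos (s / 2)) ^ mp)⁻¹) *
          (4 * ((((mm + mp) / 2) * Real.cos r - (mp - mm) / 2) / Real.sin r) - 2))
      (nhdsWithin 0 (Ioi 0)) (nhds (4 * mm / (mm - 1))) := by
  have hm : (0:ℝ) < mm - 1 := by linarith
  have hCpos : (0:ℝ) < (2:ℝ) ^ ((mm+mp)/2) := Real.rpow_pos_of_pos two_pos _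
  have h2mm : (0:ℝ) < (2:ℝ) ^ mm := Real.rpow_pos_of_pos two_pos _
  have T2 := keyA mm mp a₀ h1 ha
  have T1 : Tendsto (fun r => Qf mm mp r * r ^ (-mm)) (nhdsWithin 0 (Ioi (0:ℝ)))
      (nhds ((2:ℝ) ^ ((mm+mp)/2) / (2:ℝ) ^ mm)) := by
    have hinv := (g_lim mm mp).inv₀ (by positivity)
    rw [inv_div] at hinv
    apply hinv.congr'
    filter_upwards [self_mem_nhdsWithin] with r hr
    have hr0 : (0:ℝ) < r := hr
    rw [mul_inv, inv_inv, ← Real.rpow_neg hr0.le]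
  have T3 : Tendsto
      (fun r : ℝ => r * (4 * ((((mm+mp)/2) * Real.cos r - (mp-mm)/2) / Real.sin r) - 2))
      (nhdsWithin 0 (Ioi (0:ℝ))) (nhds (4*mm)) := by
    have hh : Tendsto (fun r : ℝ => ((mm+mp)/2) * Real.cos r - (mp-mm)/2)
        (nhdsWithin 0 (Ioi (0:ℝ))) (nhds mm) := by
      have hcont : Continuous fun r : ℝ => ((mm+mp)/2) * Real.cos r - (mp-mm)/2 :=
        (continuous_const.mul Real.continuous_cos).sub continuous_const
      have hc := hcont.tendsto 0
      have hval0 : (mm+mp)/2 * Real.cos 0 - (mp-mm)/2 = mm := by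
        rw [Real.cos_zero]; ring
      rw [hval0] at hc
      exact hc.mono_left nhdsWithin_le_nhds
    have hid : Tendsto (fun r : ℝ => r) (nhdsWithin 0 (Ioi (0:ℝ))) (nhds 0) :=
      tendsto_id.mono_left nhdsWithin_le_nhds
    have key : Tendsto
        (fun r : ℝ => 4 * (((mm+mp)/2) * Real.cos r - (mp-mm)/2) * (r / Real.sin r) - 2 * r)
        (nhdsWithin 0 (Ioi (0:ℝ))) (nhds (4 * mm * 1 - 2 * 0)) :=
      ((hh.const_mul 4).mul one_lim).sub (hid.const_mul 2)
    norm_num at key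
    apply key.congr (fun r => ?_)
    ring
  have prod := (T1.mul T2).mul T3
  have hval : (2:ℝ) ^ ((mm+mp)/2) / (2:ℝ) ^ mm * ((2:ℝ) ^ mm / (2:ℝ) ^ ((mm+mp)/2) / (mm-1))
      * (4*mm) = 4 * mm / (mm - 1) := by
    field_simp
  rw [hval] at prod
  apply prod.congr'
  filter_upwards [self_mem_nhdsWithin] with r hr
  have hr0 : (0:ℝ) < r := hr
  have hfact : r ^ (-mm) * r ^ (mm-1) * r = 1 := by
    nth_rewrite 3 [show r = r ^ (1:ℝ) by rw [Real.rpow_one]]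
    rw [← Real.rpow_add hr0, ← Real.rpow_add hr0,
      show -mm + (mm-1) + 1 = 0 by ring, Real.rpow_zero]
  simp only [Qf]
  linear_combination ((2:ℝ) ^ ((mm+mp)/2) * (Real.sin (r/2)) ^ mm * (Real.cos (r/2)) ^ mp *
    (∫ s in r..a₀, ((2:ℝ) ^ ((mm+mp)/2) * (Real.sin (s/2)) ^ mm * (Real.cos (s/2)) ^ mp)⁻¹) *
    (4 * ((((mm+mp)/2) * Real.cos r - (mp-mm)/2) / Real.sin r) - 2)) * hfact
end

section
/- Let g(t) = (λ/ℓ²)(|t|^{p−1}t − t) and G(t) = (λ/ℓ²)(|t|^{p+1}/(p+1) − t²/2) with λ, ℓ > 0, p > 1. Suppose θ > p+1 and κ ∈ (0,1) satisfy θκ^{p+1} > p+1. Then the function d ↦ θG(κd) − d·g(d) is bounded below on ℝ, and if (p+1) − (p−1)(m₋+1)/2 > 2 − (p−1)(m₋+1)/2 and (p+1) − (p−1)(m₋+1)/2 > 0 (equivalently p < (m₋+3)/(m₋−1)), one has lim_{d→∞} [θG(κd) − g(d)d]·(d/g(d))^{(m₋+1)/2} = ∞. -/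
open Real Set Filter

private theorem key_id (c a b p θ κ : ℝ) (hp : 1 < p) (hκ : 0 < κ)
    (ha : a = θ * κ ^ (p+1) / (p+1) - 1) (hb : b = 1 - θ * κ^2 / 2) (d : ℝ) :
    θ * (c * (|κ * d| ^ (p + 1) / (p + 1) - (κ * d) ^ 2 / 2))
      - d * (c * (|d| ^ (p - 1) * d - d)) = c * (a * |d| ^ (p+1) + b * d^2) := by
  have h1 : |κ * d| ^ (p+1) = κ ^ (p+1) * |d| ^ (p+1) := by
    rw [abs_mul, abs_of_pos hκ, Real.mul_rpow hκ.le (abs_nonneg d)]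
  have h2 : |d| ^ (p - 1) * d * d = |d| ^ (p+1) := by
    have h3 : |d| ^ (p - 1) * d * d = |d| ^ (p-1) * |d| ^ ((2:ℕ):ℝ) := by
      rw [Real.rpow_natCast]
      rw [sq_abs]; ring
    rw [h3, ← Real.rpow_add_of_nonneg (abs_nonneg d) (by linarith) (by norm_num)]
    congr 1; push_cast; ring
  have hp1 : (p:ℝ) + 1 ≠ 0 := by linarith
  have h2' : d * (c * (|d| ^ (p - 1) * d - d)) = c * (|d|^(p+1) - d^2) := by
    rw [← h2]; ring
  rw [h1, ha, hb, h2']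
  field_simp
  ring

private theorem key_bd (a b p : ℝ) (ha : 0 < a) (hp : 1 < p) (x : ℝ)
    (hx : max 1 ((2*|b|/a) ^ (p-1)⁻¹) ≤ x) :
    a/2 * x^(p+1) ≤ a * x^(p+1) + b * x^2 := by
  have hx1 : (1:ℝ) ≤ x := le_trans (le_max_left _ _) hx
  have hx0 : (0:ℝ) < x := by linarith
  have hR : 2*|b|/a ≤ x ^ (p-1) := by
    calc 2*|b|/a = ((2*|b|/a) ^ (p-1)⁻¹) ^ (p-1) :=
          (Real.rpow_inv_rpow (by positivity) (by intro h; nlinarith)).symm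
      _ ≤ x ^ (p-1) :=
          Real.rpow_le_rpow (by positivity) (le_trans (le_max_right _ _) hx) (by linarith)
  have hR' : 2*|b| ≤ x ^ (p-1) * a := (div_le_iff₀ ha).mp hR
  have hsplit : x ^ (p+1) = x ^ (p-1) * x^2 := by
    rw [← Real.rpow_natCast x 2, ← Real.rpow_add hx0]
    congr 1; push_cast; ring
  nlinarith [mul_le_mul_of_nonneg_right hR' (sq_nonneg x), neg_abs_le b, sq_nonneg x]

set_option maxHeartbeats 800000 in
theorem stmt15 (lam l p mm θ κ : ℝ) (hlam : 0 < lam) (hl : 0 < l) (hp : 1 < p)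
    (hm : 1 < mm) (hsub : p < (mm + 3) / (mm - 1))
    (hθ : p + 1 < θ) (hκ : κ ∈ Ioo (0:ℝ) 1) (hθκ : p + 1 < θ * κ ^ (p + 1)) :
    (∃ M : ℝ, ∀ d : ℝ,
      M ≤ θ * ((lam / l ^ 2) * (|κ * d| ^ (p + 1) / (p + 1) - (κ * d) ^ 2 / 2))
            - d * ((lam / l ^ 2) * (|d| ^ (p - 1) * d - d))) ∧
    Tendsto
      (fun d : ℝ =>
        (θ * ((lam / l ^ 2) * (|κ * d| ^ (p + 1) / (p + 1) - (κ * d) ^ 2 / 2))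
            - ((lam / l ^ 2) * (|d| ^ (p - 1) * d - d)) * d) *
          (d / ((lam / l ^ 2) * (|d| ^ (p - 1) * d - d))) ^ ((mm + 1) / 2))
      atTop atTop := by
  obtain ⟨hκ0, hκ1⟩ := hκ
  set c := lam / l ^ 2 with hcdef
  have hc : 0 < c := by positivity
  set a := θ * κ ^ (p+1) / (p+1) - 1 with hadef
  set b := 1 - θ * κ^2 / 2 with hbdef
  have ha : 0 < a := by
    have hp1 : (0:ℝ) < p + 1 := by linarith
    rw [hadef, sub_pos, lt_div_iff₀ hp1]
    linarith
  have hid := key_id c a b p θ κ hp hκ0 hadef hbdef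
  set D0 := max 1 ((2*|b|/a) ^ (p-1)⁻¹) with hD0def
  have hD01 : (1:ℝ) ≤ D0 := le_max_left _ _
  have hbd : ∀ x : ℝ, D0 ≤ x → a/2 * x^(p+1) ≤ a * x^(p+1) + b * x^2 :=
    key_bd a b p ha hp
  clear_value c a b D0
  constructor
  · -- bounded below
    refine ⟨c * (-(|b| * D0^2)), fun d => ?_⟩
    rw [hid d]
    apply mul_le_mul_of_nonneg_left _ hc.le
    rw [← sq_abs d]
    rcases le_total |d| D0 with h | h
    · have h1 : (0:ℝ) ≤ a * |d|^(p+1) :=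
        mul_nonneg ha.le (Real.rpow_nonneg (abs_nonneg d) _)
      have h2 : |d|^2 ≤ D0^2 := pow_le_pow_left₀ (abs_nonneg d) h 2
      nlinarith [h1, mul_le_mul_of_nonneg_left h2 (abs_nonneg b),
        mul_le_mul_of_nonneg_right (neg_abs_le b) (sq_nonneg |d|)]
    · have h1 := hbd |d| h
      have h2 : (0:ℝ) ≤ a/2 * |d|^(p+1) :=
        mul_nonneg (le_of_lt (half_pos ha)) (Real.rpow_nonneg (abs_nonneg d) _)
      nlinarith [h1, h2, mul_nonneg (abs_nonneg b) (sq_nonneg D0)]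
  · -- tendsto
    set α := (mm+1)/2 with hαdef
    clear_value α
    have hα0 : (0:ℝ) < α := by rw [hαdef]; linarith
    have hβ : (0:ℝ) < p + 1 + (1-p)*α := by
      have h := (lt_div_iff₀ (by linarith : (0:ℝ) < mm - 1)).mp hsub
      rw [hαdef]; nlinarith
    have hK : (0:ℝ) < a/2 * c / c ^ α := by positivity
    apply tendsto_atTop_mono' atTop _
      ((tendsto_rpow_atTop hβ).const_mul_atTop hK)
    filter_upwards [eventually_ge_atTop (max D0 2)] with d hd
    have hdD : D0 ≤ d := le_trans (le_max_left _ _) hd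
    have hd2 : (2:ℝ) ≤ d := le_trans (le_max_right _ _) hd
    have hd1 : (1:ℝ) < d := by linarith
    have hd0 : (0:ℝ) < d := by linarith
    have habs : |d| = d := abs_of_pos hd0
    have hpd : d ^ (p-1) * d = d ^ p := by
      rw [show p = (p-1)+1 by ring, Real.rpow_add_one hd0.ne']
      ring_nf
    have hgpos : 0 < d ^ p - d := by
      have := Real.rpow_lt_rpow_of_exponent_lt hd1 (by linarith : (1:ℝ) < p)
      rw [Real.rpow_one] at this
      linarith
    -- first factor
    have hF : θ * (c * (|κ * d| ^ (p + 1) / (p + 1) - (κ * d) ^ 2 / 2))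
        - (c * (|d| ^ (p - 1) * d - d)) * d = c * (a * d^(p+1) + b * d^2) := by
      have hidd := hid d
      rw [habs] at hidd ⊢
      linear_combination hidd
    have hFlb : c * (a/2 * d^(p+1)) ≤ c * (a * d^(p+1) + b * d^2) :=
      mul_le_mul_of_nonneg_left (hbd d hdD) hc.le
    have hF0 : (0:ℝ) ≤ c * (a/2 * d^(p+1)) := by
      have := Real.rpow_nonneg hd0.le (p+1)
      positivity
    -- second factor
    have hbase : d / (c * (|d| ^ (p - 1) * d - d)) = d / (c * (d^p - d)) := by
      rw [habs, hpd]
    have hgub : c * (d^p - d) ≤ c * d^p := by nlinarith [mul_pos hc hd0]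
    have hglb : (0:ℝ) < c * (d^p - d) := mul_pos hc hgpos
    have hq1 : d / (c * d^p) ≤ d / (c * (d^p - d)) :=
      div_le_div_of_nonneg_left hd0.le hglb hgub
    have hdp : (0:ℝ) < d ^ p := Real.rpow_pos_of_pos hd0 p
    have hq2 : d / (c * d^p) = d^(1-p)/c := by
      rw [div_eq_div_iff (by positivity) hc.ne']
      rw [show d ^ (1-p) * (c * d^p) = d^(1-p) * d^p * c by ring, ← Real.rpow_add hd0]
      ring_nf
      rw [Real.rpow_one]
      ring
    have hq : d^(1-p)/c ≤ d / (c * (d^p - d)) := by rw [← hq2]; exact hq1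
    have hqpow : (d^(1-p)/c)^α ≤ (d / (c * (d^p - d)))^α :=
      Real.rpow_le_rpow (by positivity) hq hα0.le
    have hqval : (d^(1-p)/c)^α = d^((1-p)*α)/c^α := by
      rw [Real.div_rpow (Real.rpow_nonneg hd0.le _) hc.le, ← Real.rpow_mul hd0.le]
    have hq0 : (0:ℝ) ≤ (d^(1-p)/c)^α := Real.rpow_nonneg (by positivity) α
    -- combine
    rw [hbase, hF]
    calc a/2 * c / c^α * d ^ (p+1+(1-p)*α)
        = (c * (a/2 * d^(p+1))) * ((d^(1-p)/c)^α) := by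
          rw [hqval, Real.rpow_add hd0]
          have hcα : (0:ℝ) < c ^ α := Real.rpow_pos_of_pos hc α
          field_simp
      _ ≤ (c * (a * d^(p+1) + b * d^2)) * ((d / (c * (d^p - d)))^α) :=
          mul_le_mul hFlb hqpow hq0 (le_trans hF0 hFlb)
end
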